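/- Let H : ℝ → ℝ be continuous and coercive and let A = (p_α)_{α∈I} be a set limiter for H. Then the A-limited flux function F_A is well defined, i.e. whenever p ∈ [p_α⁻, p_α⁺] ∩ [p_β⁻, p_β⁺] for α, β ∈ I one has H(p_α) = H(p_β); moreover F_A is continuous on ℝ and non-increasing on ℝ. -/

import Mathlib

open Set Filter Topology

/-- `p⁻ = sup {q < p : H(q) ≥ H(p)}`. -/
noncomputable def pminus (H : ℝ → ℝ) (p : ℝ) : ℝ :=
  sSup {q : ℝ | q < p ∧ H p ≤ H q}

/-- `p⁺ = inf {q > p : H(q) ≤ H(p)}`, with `inf ∅ = +∞` (extended reals). -/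
noncomputable def pplus (H : ℝ → ℝ) (p : ℝ) : EReal :=
  sInf (Real.toEReal '' {q : ℝ | p < q ∧ H q ≤ H p})

/-- `H(p) → +∞` as `|p| → +∞`. -/
def Coercive (H : ℝ → ℝ) : Prop :=
  Tendsto H atTop atTop ∧ Tendsto H atBot atTop

/-- `F(p) → +∞` as `p → -∞`. -/
def SemiCoercive (F : ℝ → ℝ) : Prop := Tendsto F atBot atTop

/-- the open interval `(a⁻, a⁺)` (upper endpoint possibly `+∞`). -/
def ooMM (H : ℝ → ℝ) (a : ℝ) : Set ℝ :=
  {r : ℝ | pminus H a < r ∧ (r : EReal) < pplus H a}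

/-- the open interval `(p, p⁺)` (upper endpoint possibly `+∞`). -/
def ooUp (H : ℝ → ℝ) (p : ℝ) : Set ℝ :=
  {r : ℝ | p < r ∧ (r : EReal) < pplus H p}

/-- the closed interval `[a⁻, a⁺]` (upper endpoint possibly `+∞`). -/
def ccMM (H : ℝ → ℝ) (a : ℝ) : Set ℝ :=
  {r : ℝ | pminus H a ≤ r ∧ (r : EReal) ≤ pplus H a}

/-- `A` is a set limiter for `H`. -/
def IsSetLimiter (H : ℝ → ℝ) (A : Set ℝ) : Prop :=
  (∀ a ∈ A, (pminus H a : EReal) ≠ pplus H a) ∧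
  (∀ a ∈ A, ∀ b ∈ A, a < b → H b ≤ H a) ∧
  (∀ p : ℝ, pminus H p < p → ∃ a ∈ A, (Ioo (pminus H p) p ∩ ooMM H a).Nonempty) ∧
  (∀ p : ℝ, (p : EReal) < pplus H p → ∃ a ∈ A, (ooUp H p ∩ ooMM H a).Nonempty)

open Classical in
/-- The `A`-limited flux function `F_A`: equal to `H(a)` on `[a⁻, a⁺]` for `a ∈ A`,
and to `H` elsewhere. -/
noncomputable def limFlux (H : ℝ → ℝ) (A : Set ℝ) (p : ℝ) : ℝ :=
  if h : ∃ a, a ∈ A ∧ p ∈ ccMM H a then H h.choose else H p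

/-- Condition (S) in the definition of `A_F`. -/
def CondS (H F : ℝ → ℝ) (p : ℝ) : Prop :=
  pminus H p ≠ p ∧ H p ≤ F p ∧
    ∀ q : ℝ, H q ≤ F q → (ooMM H q ∩ Ioo (pminus H p) p).Nonempty → H q ≤ H p

/-- Condition (T) in the definition of `A_F`. -/
def CondT (H F : ℝ → ℝ) (p : ℝ) : Prop :=
  (p : EReal) ≠ pplus H p ∧ F p ≤ H p ∧
    ∀ q : ℝ, F q ≤ H q → (ooMM H q ∩ ooUp H p).Nonempty → H p ≤ H q

/-- The set `A_F` associated with a boundary function `F`. -/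
def limiterOf (H F : ℝ → ℝ) : Set ℝ := {p : ℝ | CondS H F p ∨ CondT H F p}

/-!
On `(p⁻, p)` one has `H < H p` and on `(p, p⁺)` one has `H > H p`, while `H p⁻ = H p = H p⁺`
by continuity. Two limiter intervals `[a⁻, a⁺]`, `[b⁻, b⁺]` with `a < b` that meet carry the
same value: if `H b < H a` then `a ≤ b⁻ ≤ a⁺`, so `H a ≤ H b⁻ = H b`.

For monotonicity the only obstruction is a point `q` covered by no limiter interval with
`H q > H c` for some `c ≤ q`. The last point `t` of `[c, q]` at level `H c` has
`q ∈ (t, t⁺)`, so by property (3) some limiter interval `(b⁻, b⁺)` meets `(t, t⁺)`; as it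
misses `q`, one of its endpoints lies in `(t, t⁺)`, whence `c < b` and `H c < H b`, against
property (2). The situation left of an uncovered point is the mirror image.

Continuity follows since `F_A` is antitone and, on either side of each point, it is locally
constant or its values are values of `H` at points squeezed towards that point.
-/

theorem Antitone.continuous_of_exists_lt_of_exists_gt {α β : Type*} [LinearOrder α]
    [TopologicalSpace α] [OrderTopology α] [LinearOrder β] [TopologicalSpace β] [OrderTopology β]
    {f : α → β} (hf : Antitone f) (hlt : ∀ p c, f p < c → ∃ x < p, f x < c)
    (hgt : ∀ p c, c < f p → ∃ x > p, c < f x) : Continuous f := by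
  refine continuous_iff_continuousAt.2 fun p => tendsto_order.2 ⟨fun c hc => ?_, fun c hc => ?_⟩
  · obtain ⟨x, hpx, hx⟩ := hgt p c hc
    filter_upwards [Iio_mem_nhds hpx] with y hy using hx.trans_le (hf hy.le)
  · obtain ⟨x, hxp, hx⟩ := hlt p c hc
    filter_upwards [Ioi_mem_nhds hxp] with y hy using (hf hy.le).trans_lt hx

variable {H : ℝ → ℝ} {A : Set ℝ} {a b c p q t x : ℝ}

section pminus

lemma nonempty_pminus_set (hcoer : SemiCoercive H) (p : ℝ) :
    {q | q < p ∧ H p ≤ H q}.Nonempty := by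
  obtain ⟨q, hq, hqp⟩ :=
    ((Tendsto.eventually_ge_atTop hcoer (H p)).and (eventually_lt_atBot p)).exists
  exact ⟨q, hqp, hq⟩

lemma bddAbove_pminus_set (p : ℝ) : BddAbove {q | q < p ∧ H p ≤ H q} :=
  ⟨p, fun _ hq => hq.1.le⟩

lemma le_pminus (hqp : q < p) (h : H p ≤ H q) : q ≤ pminus H p :=
  le_csSup (bddAbove_pminus_set p) ⟨hqp, h⟩

lemma pminus_le (hcoer : SemiCoercive H) (p : ℝ) : pminus H p ≤ p :=
  csSup_le (nonempty_pminus_set hcoer p) fun _ hq => hq.1.le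

lemma pminus_le_of_forall (hcoer : SemiCoercive H) {s : ℝ}
    (h : ∀ r, s < r → r < p → H r < H p) : pminus H p ≤ s :=
  csSup_le (nonempty_pminus_set hcoer p) fun r hr =>
    le_of_not_gt fun hsr => (h r hsr hr.1).not_ge hr.2

lemma apply_lt_of_pminus_lt (h₁ : pminus H p < q) (h₂ : q < p) : H q < H p :=
  lt_of_not_ge fun h => (le_pminus h₂ h).not_gt h₁

lemma apply_pminus (hH : Continuous H) (hcoer : SemiCoercive H) (p : ℝ) :
    H (pminus H p) = H p := by
  have hge : H p ≤ H (pminus H p) :=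
    closure_minimal (fun _ hq => hq.2) (isClosed_le continuous_const hH)
      (csSup_mem_closure (nonempty_pminus_set hcoer p) (bddAbove_pminus_set p))
  rcases (pminus_le hcoer p).eq_or_lt with h | h
  · rw [h]
  refine le_antisymm (le_of_tendsto (hH.continuousWithinAt (s := Ioi (pminus H p))) ?_) hge
  filter_upwards [Ioo_mem_nhdsGT h] with q hq using (apply_lt_of_pminus_lt hq.1 hq.2).le

lemma apply_le_of_pminus_le (hH : Continuous H) (hcoer : SemiCoercive H)
    (h₁ : pminus H p ≤ q) (h₂ : q ≤ p) : H q ≤ H p := by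
  rcases h₁.eq_or_lt with rfl | h₁
  · exact (apply_pminus hH hcoer p).le
  rcases h₂.eq_or_lt with rfl | h₂
  · exact le_rfl
  exact (apply_lt_of_pminus_lt h₁ h₂).le

end pminus

section pplus

lemma coe_le_pplus (p : ℝ) : (p : EReal) ≤ pplus H p :=
  le_sInf <| by rintro _ ⟨q, hq, rfl⟩; exact_mod_cast hq.1.le

lemma exists_coe_eq_pplus (h : pplus H p ≠ ⊤) : ∃ r : ℝ, (r : EReal) = pplus H p :=
  ⟨_, EReal.coe_toReal h ((EReal.bot_lt_coe p).trans_le (coe_le_pplus p)).ne'⟩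

lemma pplus_le (hpq : p < q) (h : H q ≤ H p) : pplus H p ≤ q :=
  sInf_le ⟨q, ⟨hpq, h⟩, rfl⟩

lemma coe_le_pplus_of_forall {s : ℝ} (h : ∀ r, p < r → r < s → H p < H r) :
    (s : EReal) ≤ pplus H p :=
  le_sInf <| by
    rintro _ ⟨r, hr, rfl⟩
    exact_mod_cast le_of_not_gt fun hrs => (h r hr.1 hrs).not_ge hr.2

lemma apply_lt_of_lt_pplus (h₁ : p < q) (h₂ : (q : EReal) < pplus H p) : H p < H q :=
  lt_of_not_ge fun h => (pplus_le h₁ h).not_gt h₂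

lemma isGLB_of_pplus_eq {r : ℝ} (h : pplus H p = r) : IsGLB {q | p < q ∧ H q ≤ H p} r :=
  ⟨fun q hq => by exact_mod_cast h ▸ pplus_le (H := H) hq.1 hq.2, fun s hs => by
    have : (s : EReal) ≤ pplus H p := le_sInf <| by rintro _ ⟨q, hq, rfl⟩; exact_mod_cast hs hq
    exact_mod_cast h ▸ this⟩

lemma apply_of_pplus_eq (hH : Continuous H) {r : ℝ} (h : pplus H p = r) : H r = H p := by
  have hne : {q | p < q ∧ H q ≤ H p}.Nonempty := by
    by_contra hS
    simp [pplus, not_nonempty_iff_eq_empty.1 hS] at h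
  have hle : H r ≤ H p :=
    closure_minimal (fun _ hq => hq.2) (isClosed_le hH continuous_const)
      ((isGLB_of_pplus_eq h).mem_closure hne)
  have hpr : p ≤ r := by exact_mod_cast h ▸ coe_le_pplus (H := H) p
  rcases hpr.eq_or_lt with rfl | hpr
  · rfl
  refine le_antisymm hle (ge_of_tendsto (hH.continuousWithinAt (s := Iio r)) ?_)
  filter_upwards [Ioo_mem_nhdsLT hpr] with q hq
  exact (apply_lt_of_lt_pplus hq.1 (h ▸ EReal.coe_lt_coe_iff.2 hq.2)).le

lemma apply_le_of_le_pplus (hH : Continuous H) (h₁ : p ≤ q) (h₂ : (q : EReal) ≤ pplus H p) :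
    H p ≤ H q := by
  rcases h₁.eq_or_lt with rfl | h₁
  · exact le_rfl
  rcases h₂.eq_or_lt with h₂ | h₂
  · exact (apply_of_pplus_eq hH h₂.symm).ge
  exact (apply_lt_of_lt_pplus h₁ h₂).le

end pplus

lemma self_mem_ccMM (hcoer : SemiCoercive H) (a : ℝ) : a ∈ ccMM H a :=
  ⟨pminus_le hcoer a, coe_le_pplus a⟩

lemma pminus_mem_ccMM (hcoer : SemiCoercive H) (a : ℝ) : pminus H a ∈ ccMM H a :=
  ⟨le_rfl, (EReal.coe_le_coe_iff.2 (pminus_le hcoer a)).trans (coe_le_pplus a)⟩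

lemma ordConnected_ccMM : (ccMM H a).OrdConnected :=
  ⟨fun _ hx _ hy _ hr => ⟨hx.1.trans hr.1, (EReal.coe_le_coe_iff.2 hr.2).trans hy.2⟩⟩

lemma apply_le_of_pminus_le_pplus (hH : Continuous H) (hcoer : SemiCoercive H) (hab : a ≤ b)
    (h : (pminus H b : EReal) ≤ pplus H a) : H a ≤ H b := by
  by_contra! hlt
  have hab' : a < b := hab.lt_of_ne (by rintro rfl; exact lt_irrefl _ hlt)
  have := (apply_le_of_le_pplus hH (le_pminus hab' hlt.le) h).trans_eq (apply_pminus hH hcoer b)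
  exact this.not_gt hlt

/-- The last point `t` of `[c, q]` at level `H c`. -/
lemma exists_lt_pplus_of_apply_lt (hH : Continuous H) (hcq : c ≤ q) (hlt : H c < H q) :
    ∃ t, c ≤ t ∧ t < q ∧ H t = H c ∧ (q : EReal) < pplus H t := by
  have hK : IsCompact (Icc c q ∩ {r | H r ≤ H c}) :=
    isCompact_Icc.inter_right (isClosed_le hH continuous_const)
  obtain ⟨t, ⟨⟨hct, htq⟩, htc⟩, hmax⟩ := hK.exists_isGreatest ⟨c, ⟨le_rfl, hcq⟩, le_refl (H c)⟩
  have above : ∀ r, t < r → r ≤ q → H c < H r := fun r htr hrq =>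
    lt_of_not_ge fun hr => (hmax ⟨⟨hct.trans htr.le, hrq⟩, hr⟩).not_gt htr
  have hHt : H t = H c := by
    obtain ⟨r, ⟨htr, hrq⟩, hr⟩ := intermediate_value_Icc htq hH.continuousOn ⟨htc, hlt.le⟩
    rwa [le_antisymm (hmax ⟨⟨hct.trans htr, hrq⟩, hr.le⟩) htr] at hr
  have htq' : t < q := htq.lt_of_ne (by rintro rfl; exact hlt.ne' hHt)
  obtain ⟨s, hqs, hs⟩ := exists_Ico_subset_of_mem_nhds
    ((isOpen_lt continuous_const hH).mem_nhds hlt) ⟨q + 1, by linarith⟩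
  refine ⟨t, hct, htq', hHt,
    (EReal.coe_lt_coe_iff.2 hqs).trans_le (coe_le_pplus_of_forall fun r htr hrs => ?_)⟩
  rw [hHt]
  rcases le_or_gt r q with hrq | hqr
  · exact above r htr hrq
  · exact hs ⟨hqr.le, hrs⟩

/-- The first point `t` of `[p, m]` at level `H m`. -/
lemma exists_pminus_lt_of_apply_lt (hH : Continuous H) (hcoer : SemiCoercive H) {m : ℝ}
    (hpm : p ≤ m) (hlt : H p < H m) : ∃ t, p < t ∧ t ≤ m ∧ H t = H m ∧ pminus H t < p := by
  have hK : IsCompact (Icc p m ∩ {r | H m ≤ H r}) :=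
    isCompact_Icc.inter_right (isClosed_le continuous_const hH)
  obtain ⟨t, ⟨⟨hpt, htm⟩, hmt⟩, hmin⟩ := hK.exists_isLeast ⟨m, ⟨hpm, le_rfl⟩, le_refl (H m)⟩
  have below : ∀ r, p ≤ r → r < t → H r < H m := fun r hpr hrt =>
    lt_of_not_ge fun hr => (hmin ⟨⟨hpr, hrt.le.trans htm⟩, hr⟩).not_gt hrt
  have hHt : H t = H m := by
    obtain ⟨r, ⟨hpr, hrt⟩, hr⟩ := intermediate_value_Icc hpt hH.continuousOn ⟨hlt.le, hmt⟩
    rwa [le_antisymm hrt (hmin ⟨⟨hpr, hrt.trans htm⟩, hr.ge⟩)] at hr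
  have hpt' : p < t := hpt.lt_of_ne (by rintro rfl; exact hlt.ne hHt)
  obtain ⟨s, hsp, hs⟩ := exists_Ioc_subset_of_mem_nhds
    ((isOpen_lt hH continuous_const).mem_nhds hlt) ⟨p - 1, by linarith⟩
  refine ⟨t, hpt', htm, hHt, (pminus_le_of_forall hcoer fun r hsr hrt => ?_).trans_lt hsp⟩
  rw [hHt]
  rcases le_or_gt p r with hpr | hrp
  · exact below r hpr hrt
  · exact hs ⟨hsr, hrp.le⟩

def IsCovered (H : ℝ → ℝ) (A : Set ℝ) (p : ℝ) : Prop := ∃ a ∈ A, p ∈ ccMM H a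

lemma limFlux_of_not_isCovered (h : ¬IsCovered H A p) : limFlux H A p = H p := dif_neg h

namespace IsSetLimiter

lemma antitoneOn (hA : IsSetLimiter H A) : AntitoneOn H A := fun a ha b hb hab =>
  hab.eq_or_lt.elim (fun h => h ▸ le_rfl) (hA.2.1 a ha b hb)

lemma apply_eq_of_mem_ccMM (hH : Continuous H) (hcoer : SemiCoercive H) (hA : IsSetLimiter H A)
    (ha : a ∈ A) (hb : b ∈ A) (hpa : p ∈ ccMM H a) (hpb : p ∈ ccMM H b) : H a = H b := by
  wlog hab : a ≤ b generalizing a b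
  · exact (this hb ha hpb hpa (le_of_not_ge hab)).symm
  exact le_antisymm
    (apply_le_of_pminus_le_pplus hH hcoer hab ((EReal.coe_le_coe_iff.2 hpb.1).trans hpa.2))
    (hA.antitoneOn ha hb hab)

lemma exists_gt_of_lt_pplus (hH : Continuous H) (hcoer : SemiCoercive H)
    (hA : IsSetLimiter H A) (htq : t < q) (hq : (q : EReal) < pplus H t)
    (hcov : ¬IsCovered H A q) : ∃ b ∈ A, t < b ∧ H t < H b := by
  obtain ⟨b, hb, x, ⟨htx, hxt⟩, hbx, hxb⟩ :=
    hA.2.2.2 t ((EReal.coe_lt_coe_iff.2 htq).trans hq)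
  refine ⟨b, hb, ?_⟩
  by_cases hqb : q < pminus H b
  · have := apply_lt_of_lt_pplus (htq.trans hqb) ((EReal.coe_lt_coe_iff.2 hbx).trans hxt)
    rw [apply_pminus hH hcoer] at this
    exact ⟨(htq.trans hqb).trans_le (pminus_le hcoer b), this⟩
  have hbq : pplus H b < q := lt_of_not_ge fun h => hcov ⟨b, hb, le_of_not_gt hqb, h⟩
  obtain ⟨d, hd⟩ := exists_coe_eq_pplus hbq.ne_top
  rw [← hd, EReal.coe_lt_coe_iff] at hbq hxb
  have hHb : H t < H b := by
    rw [← apply_of_pplus_eq hH hd.symm]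
    exact apply_lt_of_lt_pplus (htx.trans hxb) ((EReal.coe_lt_coe_iff.2 hbq).trans hq)
  refine ⟨lt_of_not_ge fun hbt => ?_, hHb⟩
  have := apply_le_of_le_pplus hH hbt (hd ▸ EReal.coe_le_coe_iff.2 (htx.trans hxb).le)
  exact this.not_gt hHb

lemma exists_lt_of_pminus_lt (hH : Continuous H) (hcoer : SemiCoercive H)
    (hA : IsSetLimiter H A) (htp : pminus H t < p) (hpt : p < t)
    (hcov : ¬IsCovered H A p) : ∃ c ∈ A, c < t ∧ H c < H t := by
  obtain ⟨c, hc, x, ⟨htx, hxt⟩, hcx, hxc⟩ := hA.2.2.1 t (htp.trans hpt)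
  refine ⟨c, hc, ?_⟩
  by_cases hpc : p < pminus H c
  · have hHc : H c < H t := by
      rw [← apply_pminus hH hcoer c]
      exact apply_lt_of_pminus_lt (htp.trans hpc) (hcx.trans hxt)
    refine ⟨lt_of_not_ge fun htc => ?_, hHc⟩
    exact (apply_le_of_pminus_le hH hcoer (hcx.trans hxt).le htc).not_gt hHc
  have hcp : pplus H c < p := lt_of_not_ge fun h => hcov ⟨c, hc, le_of_not_gt hpc, h⟩
  obtain ⟨e, he⟩ := exists_coe_eq_pplus hcp.ne_top
  have hce : c ≤ e := by exact_mod_cast he ▸ coe_le_pplus (H := H) c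
  rw [← he, EReal.coe_lt_coe_iff] at hcp hxc
  refine ⟨hce.trans_lt (hcp.trans hpt), ?_⟩
  rw [← apply_of_pplus_eq hH he.symm]
  exact apply_lt_of_pminus_lt (htx.trans hxc) (hcp.trans hpt)

lemma exists_gt_of_not_isCovered (hH : Continuous H) (hcoer : SemiCoercive H)
    (hA : IsSetLimiter H A) (hcov : ¬IsCovered H A q) (hcq : c ≤ q) (hlt : H c < H q) :
    ∃ b ∈ A, c < b ∧ H c < H b := by
  obtain ⟨t, hct, htq, hHt, hq⟩ := exists_lt_pplus_of_apply_lt hH hcq hlt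
  obtain ⟨b, hb, htb, hHb⟩ := hA.exists_gt_of_lt_pplus hH hcoer htq hq hcov
  exact ⟨b, hb, hct.trans_lt htb, hHt ▸ hHb⟩

lemma exists_lt_of_not_isCovered (hH : Continuous H) (hcoer : SemiCoercive H)
    (hA : IsSetLimiter H A) (hcov : ¬IsCovered H A p) {m : ℝ} (hpm : p ≤ m) (hlt : H p < H m) :
    ∃ b ∈ A, b < m ∧ H b < H m := by
  obtain ⟨t, hpt, htm, hHt, htp⟩ := exists_pminus_lt_of_apply_lt hH hcoer hpm hlt
  obtain ⟨b, hb, hbt, hHb⟩ := hA.exists_lt_of_pminus_lt hH hcoer htp hpt hcov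
  exact ⟨b, hb, hbt.trans_le htm, hHt ▸ hHb⟩

lemma apply_le_of_not_isCovered_of_le (hH : Continuous H) (hcoer : SemiCoercive H)
    (hA : IsSetLimiter H A) (hcov : ¬IsCovered H A p) (hb : b ∈ A) (hpb : p ≤ b) :
    H b ≤ H p := by
  by_contra! hlt
  obtain ⟨c, hc, hcb, hHc⟩ := hA.exists_lt_of_not_isCovered hH hcoer hcov hpb hlt
  exact (hA.antitoneOn hc hb hcb.le).not_gt hHc

lemma apply_le_of_le_of_not_isCovered (hH : Continuous H) (hcoer : SemiCoercive H)
    (hA : IsSetLimiter H A) (ha : a ∈ A) (hcov : ¬IsCovered H A q) (haq : a ≤ q) :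
    H q ≤ H a := by
  by_contra! hlt
  obtain ⟨b, hb, hab, hHb⟩ := hA.exists_gt_of_not_isCovered hH hcoer hcov haq hlt
  exact (hA.antitoneOn ha hb hab.le).not_gt hHb

lemma apply_le_of_not_isCovered_of_not_isCovered (hH : Continuous H) (hcoer : SemiCoercive H)
    (hA : IsSetLimiter H A) (hp : ¬IsCovered H A p) (hq : ¬IsCovered H A q) (hpq : p ≤ q) :
    H q ≤ H p := by
  by_contra! hlt
  obtain ⟨b, hb, hpb, hHb⟩ := hA.exists_gt_of_not_isCovered hH hcoer hq hpq hlt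
  exact (hA.apply_le_of_not_isCovered_of_le hH hcoer hp hb hpb.le).not_gt hHb

lemma limFlux_of_mem (hH : Continuous H) (hcoer : SemiCoercive H) (hA : IsSetLimiter H A)
    (ha : a ∈ A) (hpa : p ∈ ccMM H a) : limFlux H A p = H a := by
  have h : ∃ a ∈ A, p ∈ ccMM H a := ⟨a, ha, hpa⟩
  rw [limFlux, dif_pos h]
  exact hA.apply_eq_of_mem_ccMM hH hcoer h.choose_spec.1 ha h.choose_spec.2 hpa

lemma antitone_limFlux (hH : Continuous H) (hcoer : SemiCoercive H) (hA : IsSetLimiter H A) :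
    Antitone (limFlux H A) := by
  intro p q hpq
  by_cases hp : IsCovered H A p <;> by_cases hq : IsCovered H A q
  · obtain ⟨a, ha, hpa⟩ := hp
    obtain ⟨b, hb, hqb⟩ := hq
    rw [hA.limFlux_of_mem hH hcoer ha hpa, hA.limFlux_of_mem hH hcoer hb hqb]
    rcases le_or_gt a b with hab | hba
    · exact hA.antitoneOn ha hb hab
    · exact apply_le_of_pminus_le_pplus hH hcoer hba.le
        ((EReal.coe_le_coe_iff.2 (hpa.1.trans hpq)).trans hqb.2)
  · obtain ⟨a, ha, hpa⟩ := hp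
    rw [hA.limFlux_of_mem hH hcoer ha hpa, limFlux_of_not_isCovered hq]
    refine hA.apply_le_of_le_of_not_isCovered hH hcoer ha hq
      (le_of_not_ge fun hqa => hq ⟨a, ha, ?_⟩)
    exact ordConnected_ccMM.out hpa (self_mem_ccMM hcoer a) ⟨hpq, hqa⟩
  · obtain ⟨b, hb, hqb⟩ := hq
    rw [limFlux_of_not_isCovered hp, hA.limFlux_of_mem hH hcoer hb hqb]
    refine hA.apply_le_of_not_isCovered_of_le hH hcoer hp hb
      (le_of_not_gt fun hbp => hp ⟨b, hb, ?_⟩)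
    exact ordConnected_ccMM.out (self_mem_ccMM hcoer b) hqb ⟨hbp.le, hpq⟩
  · rw [limFlux_of_not_isCovered hp, limFlux_of_not_isCovered hq]
    exact hA.apply_le_of_not_isCovered_of_not_isCovered hH hcoer hp hq hpq

lemma limFlux_eq_or_exists_of_le (hH : Continuous H) (hcoer : SemiCoercive H)
    (hA : IsSetLimiter H A) (hxp : x ≤ p) :
    limFlux H A x = limFlux H A p ∨ ∃ y ∈ Icc x p, limFlux H A x = H y := by
  by_cases hx : IsCovered H A x
  · obtain ⟨c, hc, hxc⟩ := hx
    rw [hA.limFlux_of_mem hH hcoer hc hxc]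
    by_cases hpc : (p : EReal) ≤ pplus H c
    · exact Or.inl (hA.limFlux_of_mem hH hcoer hc ⟨hxc.1.trans hxp, hpc⟩).symm
    obtain ⟨e, he⟩ := exists_coe_eq_pplus (lt_of_not_ge hpc).ne_top
    have hxe : x ≤ e := by exact_mod_cast he ▸ hxc.2
    have hep : e < p := by exact_mod_cast he ▸ lt_of_not_ge hpc
    exact Or.inr ⟨e, ⟨hxe, hep.le⟩, (apply_of_pplus_eq hH he.symm).symm⟩
  · exact Or.inr ⟨x, left_mem_Icc.2 hxp, limFlux_of_not_isCovered hx⟩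

lemma limFlux_eq_or_exists_of_ge (hH : Continuous H) (hcoer : SemiCoercive H)
    (hA : IsSetLimiter H A) (hpx : p ≤ x) :
    limFlux H A x = limFlux H A p ∨ ∃ y ∈ Icc p x, limFlux H A x = H y := by
  by_cases hx : IsCovered H A x
  · obtain ⟨c, hc, hxc⟩ := hx
    rw [hA.limFlux_of_mem hH hcoer hc hxc]
    by_cases hpc : pminus H c ≤ p
    · exact Or.inl (hA.limFlux_of_mem hH hcoer hc
        ⟨hpc, (EReal.coe_le_coe_iff.2 hpx).trans hxc.2⟩).symm
    · exact Or.inr ⟨pminus H c, ⟨(lt_of_not_ge hpc).le, hxc.1⟩, (apply_pminus hH hcoer c).symm⟩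
  · exact Or.inr ⟨x, right_mem_Icc.2 hpx, limFlux_of_not_isCovered hx⟩

lemma limFlux_eq_of_forall_le_pminus (hH : Continuous H) (hcoer : SemiCoercive H)
    (hA : IsSetLimiter H A) (h : ∀ a ∈ A, p ∈ ccMM H a → p ≤ pminus H a) :
    limFlux H A p = H p := by
  by_cases hp : IsCovered H A p
  · obtain ⟨a, ha, hpa⟩ := hp
    rw [hA.limFlux_of_mem hH hcoer ha hpa, ← le_antisymm hpa.1 (h a ha hpa),
      apply_pminus hH hcoer]
  · exact limFlux_of_not_isCovered hp

lemma limFlux_eq_of_forall_pplus_le (hH : Continuous H) (hcoer : SemiCoercive H)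
    (hA : IsSetLimiter H A) (h : ∀ a ∈ A, p ∈ ccMM H a → pplus H a ≤ p) :
    limFlux H A p = H p := by
  by_cases hp : IsCovered H A p
  · obtain ⟨a, ha, hpa⟩ := hp
    rw [hA.limFlux_of_mem hH hcoer ha hpa,
      apply_of_pplus_eq hH (le_antisymm (h a ha hpa) hpa.2)]
  · exact limFlux_of_not_isCovered hp

lemma exists_lt_limFlux_lt (hH : Continuous H) (hcoer : SemiCoercive H)
    (hA : IsSetLimiter H A) (hc : limFlux H A p < c) : ∃ x < p, limFlux H A x < c := by
  by_cases h : ∃ a ∈ A, p ∈ ccMM H a ∧ pminus H a < p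
  · obtain ⟨a, ha, hpa, hlt⟩ := h
    refine ⟨pminus H a, hlt, ?_⟩
    rwa [hA.limFlux_of_mem hH hcoer ha (pminus_mem_ccMM hcoer a),
      ← hA.limFlux_of_mem hH hcoer ha hpa]
  push Not at h
  have hFp := hA.limFlux_eq_of_forall_le_pminus hH hcoer h
  rw [hFp] at hc
  obtain ⟨l, hlp, hl⟩ := exists_Ioc_subset_of_mem_nhds
    (hH.continuousAt.preimage_mem_nhds (Iio_mem_nhds hc)) ⟨p - 1, by linarith⟩
  obtain ⟨x, hlx, hxp⟩ := exists_between hlp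
  refine ⟨x, hxp, ?_⟩
  rcases hA.limFlux_eq_or_exists_of_le hH hcoer hxp.le with hx | ⟨y, hy, hx⟩
  · rwa [hx, hFp]
  · rw [hx]
    exact hl ⟨hlx.trans_le hy.1, hy.2⟩

lemma exists_gt_lt_limFlux (hH : Continuous H) (hcoer : SemiCoercive H)
    (hA : IsSetLimiter H A) (hc : c < limFlux H A p) : ∃ x > p, c < limFlux H A x := by
  by_cases h : ∃ a ∈ A, p ∈ ccMM H a ∧ (p : EReal) < pplus H a
  · obtain ⟨a, ha, hpa, hlt⟩ := h
    obtain ⟨x, hpx, hxa⟩ := EReal.lt_iff_exists_real_btwn.1 hlt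
    rw [EReal.coe_lt_coe_iff] at hpx
    refine ⟨x, hpx, ?_⟩
    rwa [hA.limFlux_of_mem hH hcoer ha ⟨hpa.1.trans hpx.le, hxa.le⟩,
      ← hA.limFlux_of_mem hH hcoer ha hpa]
  push Not at h
  have hFp := hA.limFlux_eq_of_forall_pplus_le hH hcoer h
  rw [hFp] at hc
  obtain ⟨u, hpu, hu⟩ := exists_Ico_subset_of_mem_nhds
    (hH.continuousAt.preimage_mem_nhds (Ioi_mem_nhds hc)) ⟨p + 1, by linarith⟩
  obtain ⟨x, hpx, hxu⟩ := exists_between hpu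
  refine ⟨x, hpx, ?_⟩
  rcases hA.limFlux_eq_or_exists_of_ge hH hcoer hpx.le with hx | ⟨y, hy, hx⟩
  · rwa [hx, hFp]
  · rw [hx]
    exact hu ⟨hy.1, hy.2.trans_lt hxu⟩

end IsSetLimiter

theorem stmt3 (H : ℝ → ℝ) (hH : Continuous H) (hcoer : Coercive H)
    (A : Set ℝ) (hA : IsSetLimiter H A) :
    (∀ p : ℝ, ∀ a ∈ A, ∀ b ∈ A, p ∈ ccMM H a → p ∈ ccMM H b → H a = H b) ∧
    Continuous (limFlux H A) ∧ Antitone (limFlux H A) := by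
  have hcoer' : SemiCoercive H := hcoer.2
  have hanti := hA.antitone_limFlux hH hcoer'
  refine ⟨fun _ _ ha _ hb => hA.apply_eq_of_mem_ccMM hH hcoer' ha hb, ?_, hanti⟩
  exact hanti.continuous_of_exists_lt_of_exists_gt
    (fun _ _ => hA.exists_lt_limFlux_lt hH hcoer') (fun _ _ => hA.exists_gt_lt_limFlux hH hcoer')
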